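/- arXiv:2111.05520 — 3 statements merged into one kernel-verified Lean document; each statement's English description precedes it below -/
import Mathlib

section
/- Let Ω ⊂ ℍ be an axially symmetric slice domain, v ∈ ℍ, and f : Ω → ℍ be C¹. Then f is v-slice regular (i.e. for every i ∈ 𝕊², ∂(f|_{Ω_i})/∂z̄_i + (1/4)(v - ivi)·f|_{Ω_i} = 0 on Ω_i) if and only if the function q ↦ e^{⟨q,v⟩} f(q) is slice regular on Ω. -/
open Quaternion

noncomputable section

/-- Real Euclidean inner product on the quaternions (sum of products of components). -/
def qinner (q v : ℍ[ℝ]) : ℝ :=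
  q.re * v.re + q.imI * v.imI + q.imJ * v.imJ + q.imK * v.imK

/-- The sphere of purely imaginary unit quaternions. -/
def Sph2 : Set ℍ[ℝ] := {i | i.re = 0 ∧ ‖i‖ = 1}

/-- The complex slice plane `ℂ(i) = {x + y i : x, y ∈ ℝ}`. -/
def slicePlane (i : ℍ[ℝ]) : Set ℍ[ℝ] := {z | ∃ x y : ℝ, z = (x : ℍ[ℝ]) + y • i}

/-- The slice Cauchy–Riemann operator `∂/∂ z̄_i = (1/2)(∂/∂x + i ∂/∂y)`. -/
def dbar (i : ℍ[ℝ]) (f : ℍ[ℝ] → ℍ[ℝ]) (q : ℍ[ℝ]) : ℍ[ℝ] :=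
  (1 / 2 : ℝ) • (fderiv ℝ f q 1 + i * fderiv ℝ f q i)

/-- Slice regular functions on `Ω`. -/
def SliceRegularOn (f : ℍ[ℝ] → ℍ[ℝ]) (Ω : Set ℍ[ℝ]) : Prop :=
  ContDiffOn ℝ 1 f Ω ∧ ∀ i ∈ Sph2, ∀ q ∈ Ω ∩ slicePlane i, dbar i f q = 0

/-- `v`-slice regular functions on `Ω`. -/
def VSliceRegularOn (v : ℍ[ℝ]) (f : ℍ[ℝ] → ℍ[ℝ]) (Ω : Set ℍ[ℝ]) : Prop :=
  ContDiffOn ℝ 1 f Ω ∧ ∀ i ∈ Sph2, ∀ q ∈ Ω ∩ slicePlane i,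
    dbar i f q + (1 / 4 : ℝ) • ((v - i * v * i) * f q) = 0

/-- Axially symmetric slice domain. -/
def AxSymSliceDomain (Ω : Set ℍ[ℝ]) : Prop :=
  IsOpen Ω ∧ IsConnected Ω ∧ (∃ r : ℝ, (r : ℍ[ℝ]) ∈ Ω) ∧
  (∀ i ∈ Sph2, IsConnected (Ω ∩ slicePlane i)) ∧
  (∀ (x y : ℝ), ∀ i ∈ Sph2, (x : ℍ[ℝ]) + y • i ∈ Ω → ∀ j ∈ Sph2, (x : ℍ[ℝ]) + y • j ∈ Ω)

/-!
Since `e^{⟨q,v⟩}` is a nowhere vanishing real scalar, the Leibniz rule gives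
`∂̄_i (e^{⟨·,v⟩} f) = e^{⟨q,v⟩} (∂̄_i f + ½ (Re v + ⟨i,v⟩ i) f)`, and for a unit imaginary `i` one has
`v - i v i = 2 (Re v + ⟨i,v⟩ i)`. So the two Cauchy–Riemann type equations differ by the factor
`e^{⟨q,v⟩}` at every point.
-/

lemma qinner_eq_innerSL (q v : ℍ[ℝ]) : qinner q v = innerSL ℝ v q := by
  simp only [qinner, innerSL_apply_apply, inner_def, re_mul, re_star, imI_star, imJ_star,
    imK_star]
  ring

lemma hasFDerivAt_exp_qinner (v q : ℍ[ℝ]) :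
    HasFDerivAt (fun q => Real.exp (qinner q v))
      (Real.exp (qinner q v) • innerSL ℝ v) q := by
  simp only [qinner_eq_innerSL]
  exact (innerSL ℝ v).hasFDerivAt.exp

lemma contDiff_exp_qinner (v : ℍ[ℝ]) : ContDiff ℝ 1 fun q => Real.exp (qinner q v) := by
  simp only [qinner_eq_innerSL]
  exact Real.contDiff_exp.comp (innerSL ℝ v).contDiff

lemma dbar_smul {i q : ℍ[ℝ]} {φ : ℍ[ℝ] → ℝ} {φ' : ℍ[ℝ] →L[ℝ] ℝ} {f : ℍ[ℝ] → ℍ[ℝ]}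
    (hφ : HasFDerivAt φ φ' q) (hf : DifferentiableAt ℝ f q) :
    dbar i (fun q => φ q • f q) q
      = φ q • dbar i f q + (1 / 2 : ℝ) • (((φ' 1 : ℍ[ℝ]) + φ' i • i) * f q) := by
  rw [dbar, dbar, (hφ.fun_smul hf.hasFDerivAt).fderiv]
  simp only [add_apply, smul_apply, ContinuousLinearMap.smulRight_apply, add_mul, mul_add,
    smul_mul_assoc, mul_smul_comm, coe_mul_eq_smul]
  module

lemma sub_mul_mul_eq_of_mem_Sph2 {i : ℍ[ℝ]} (hi : i ∈ Sph2) (v : ℍ[ℝ]) :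
    v - i * v * i = (2 : ℝ) • ((v.re : ℍ[ℝ]) + qinner i v • i) := by
  obtain ⟨hre, hnorm⟩ := hi
  have hsq : i.imI ^ 2 + i.imJ ^ 2 + i.imK ^ 2 = 1 := by
    have := normSq_eq_norm_mul_self (a := i)
    rw [normSq_def', hnorm, hre] at this
    linarith
  ext <;>
    simp only [qinner, re_sub, imI_sub, imJ_sub, imK_sub, re_mul, imI_mul, imJ_mul, imK_mul,
      re_add, imI_add, imJ_add, imK_add, re_smul, imI_smul, imJ_smul, imK_smul, re_coe, imI_coe,
      imJ_coe, imK_coe, smul_eq_mul] <;>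
    grind

lemma dbar_exp_qinner_smul {i : ℍ[ℝ]} (hi : i ∈ Sph2) (v : ℍ[ℝ]) {f : ℍ[ℝ] → ℍ[ℝ]} {q : ℍ[ℝ]}
    (hf : DifferentiableAt ℝ f q) :
    dbar i (fun q => Real.exp (qinner q v) • f q) q
      = Real.exp (qinner q v) • (dbar i f q + (1 / 4 : ℝ) • ((v - i * v * i) * f q)) := by
  rw [dbar_smul (hasFDerivAt_exp_qinner v q) hf, sub_mul_mul_eq_of_mem_Sph2 hi]
  have hinner_one : innerSL ℝ v 1 = v.re := by simp [← qinner_eq_innerSL, qinner]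
  simp only [smul_apply, hinner_one, ← qinner_eq_innerSL, smul_eq_mul, add_mul, smul_mul_assoc,
    coe_mul_eq_smul]
  module

/-- a `C¹` function on an axially symmetric slice domain is `v`-slice
regular iff `q ↦ e^{⟨q,v⟩} f(q)` is slice regular. -/
theorem stmt7 (Ω : Set ℍ[ℝ]) (hΩ : AxSymSliceDomain Ω) (v : ℍ[ℝ])
    (f : ℍ[ℝ] → ℍ[ℝ]) (hf : ContDiffOn ℝ 1 f Ω) :
    VSliceRegularOn v f Ω ↔
      SliceRegularOn (fun q => Real.exp (qinner q v) • f q) Ω := by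
  have hdiff : ∀ q ∈ Ω, DifferentiableAt ℝ f q := fun q hq =>
    (hf.contDiffAt (hΩ.1.mem_nhds hq)).differentiableAt one_ne_zero
  have hdbar : ∀ i ∈ Sph2, ∀ q ∈ Ω,
      dbar i (fun q => Real.exp (qinner q v) • f q) q = 0 ↔
        dbar i f q + (1 / 4 : ℝ) • ((v - i * v * i) * f q) = 0 := fun i hi q hq => by
    rw [dbar_exp_qinner_smul hi v (hdiff q hq), smul_eq_zero_iff_right (Real.exp_ne_zero _)]
  have hsmooth := (contDiff_exp_qinner v).contDiffOn.smul hf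
  exact ⟨fun h => ⟨hsmooth, fun i hi q hq => (hdbar i hi q hq.1).2 (h.2 i hi q hq)⟩,
    fun h => ⟨hf, fun i hi q hq => (hdbar i hi q hq.1).1 (h.2 i hi q hq)⟩⟩
end
end

section
/- Splitting Lemma for v-slice regular functions: Let Ω ⊂ ℍ be an axially symmetric slice domain, v ∈ ℍ, and f ∈ 𝒮ℛ_v(Ω). For any i, j ∈ 𝕊² orthogonal to each other, there exist functions F, G : Ω_i → ℂ(i) satisfying ∂F/∂z̄_i + (1/4)(v - ivi)F = 0 and ∂G/∂z̄_i + (1/4)(v - ivi)G = 0 on Ω_i, such that f|_{Ω_i} = F + G·j on Ω_i. -/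
open Quaternion

noncomputable section

/-- Wirtinger-type operator on the slice parametrized by `(x,y) ↦ x + y i`. -/
def dbar2 (i : ℍ[ℝ]) (f : ℝ × ℝ → ℍ[ℝ]) (p : ℝ × ℝ) : ℍ[ℝ] :=
  (1 / 2 : ℝ) • (fderiv ℝ f p (1, 0) + i * fderiv ℝ f p (0, 1))

/-- Parameter domain of the slice `Ω_i = Ω ∩ ℂ(i)` in coordinates `(x,y)`. -/
def sliceParam (Ω : Set ℍ[ℝ]) (i : ℍ[ℝ]) : Set (ℝ × ℝ) :=
  {p | (p.1 : ℍ[ℝ]) + p.2 • i ∈ Ω}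

/-! `ℂ(i)` is the commutant of `i`, and the real-linear projections `a ↦ (a - i a i)/2` and
`a ↦ -(a + i a i) j / 2` split every quaternion as `a = F + G j` with `F, G ∈ ℂ(i)`. Both
projections commute with left multiplication by anything commuting with `i`, in particular by `i`
and by `v - i v i`; hence they commute with `∂/∂z̄_i + (1/4)(v - i v i)`, and applying them to
`f|_{Ω_i}` gives the two components. -/

section Algebra

variable {i j : ℍ[ℝ]}

lemma mul_self_eq_neg_one_of_mem_Sph2 (hi : i ∈ Sph2) : i * i = -1 := by
  have h := sq_eq_neg_normSq.mpr hi.1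
  rw [normSq_eq_norm_mul_self, hi.2, mul_one] at h
  simpa [sq] using h

lemma mul_eq_neg_mul_of_qinner_eq_zero (hi : i.re = 0) (hj : j.re = 0) (h : qinner i j = 0) :
    i * j = -(j * i) := by
  simp only [qinner, hi, hj, zero_mul, zero_add] at h
  ext
  · simp [hi, hj]; linear_combination -2 * h
  all_goals simp [hi, hj]; ring

lemma mem_slicePlane_of_commute {q : ℍ[ℝ]} (hi : i ∈ Sph2) (h : Commute q i) :
    q ∈ slicePlane i := by
  have hn : i.imI ^ 2 + i.imJ ^ 2 + i.imK ^ 2 = 1 := by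
    have := normSq_eq_norm_mul_self i
    rw [hi.2, normSq_def', hi.1] at this
    linarith
  have e1 := congrArg QuaternionAlgebra.imI h.eq
  have e2 := congrArg QuaternionAlgebra.imJ h.eq
  have e3 := congrArg QuaternionAlgebra.imK h.eq
  simp only [Quaternion.imI_mul, Quaternion.imJ_mul, Quaternion.imK_mul, hi.1] at e1 e2 e3
  refine ⟨q.re, q.imI * i.imI + q.imJ * i.imJ + q.imK * i.imK, ?_⟩
  ext <;> simp [hi.1]
  · linear_combination (-q.imI) * hn + i.imJ / 2 * e3 - i.imK / 2 * e2
  · linear_combination (-q.imJ) * hn - i.imI / 2 * e3 + i.imK / 2 * e1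
  · linear_combination (-q.imK) * hn + i.imI / 2 * e2 - i.imJ / 2 * e1

lemma mul_sandwich (hi : i * i = -1) (a : ℍ[ℝ]) : i * (i * a * i) = -(a * i) := by
  simp only [← mul_assoc, hi]; simp

lemma sandwich_mul (hi : i * i = -1) (a : ℍ[ℝ]) : i * a * i * i = -(i * a) := by
  rw [mul_assoc (i * a), hi]; simp

lemma commute_sub_sandwich (hi : i * i = -1) (a : ℍ[ℝ]) : Commute i (a - i * a * i) := by
  rw [Commute, SemiconjBy, mul_sub, sub_mul, mul_sandwich hi, sandwich_mul hi]
  abel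

lemma mul_add_sandwich (hi : i * i = -1) (a : ℍ[ℝ]) :
    i * (a + i * a * i) = -((a + i * a * i) * i) := by
  rw [mul_add, add_mul, mul_sandwich hi, sandwich_mul hi]
  abel

end Algebra

section Splitting

variable (i j : ℍ[ℝ])

def splitFst : ℍ[ℝ] →L[ℝ] ℍ[ℝ] :=
  (1 / 2 : ℝ) • (ContinuousLinearMap.id ℝ ℍ[ℝ] - ContinuousLinearMap.mulLeftRight ℝ ℍ[ℝ] i i)

def splitSnd : ℍ[ℝ] →L[ℝ] ℍ[ℝ] :=
  (ContinuousLinearMap.mul ℝ ℍ[ℝ]).flip j ∘L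
    ((-(1 / 2) : ℝ) •
      (ContinuousLinearMap.id ℝ ℍ[ℝ] + ContinuousLinearMap.mulLeftRight ℝ ℍ[ℝ] i i))

variable {i j}

@[simp]
lemma splitFst_apply (a : ℍ[ℝ]) : splitFst i a = (1 / 2 : ℝ) • (a - i * a * i) := by
  simp [splitFst]

@[simp]
lemma splitSnd_apply (a : ℍ[ℝ]) : splitSnd i j a = (-(1 / 2) : ℝ) • ((a + i * a * i) * j) := by
  simp [splitSnd, add_mul]

lemma splitFst_mul_left {c : ℍ[ℝ]} (hc : Commute i c) (a : ℍ[ℝ]) :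
    splitFst i (c * a) = c * splitFst i a := by
  have h : i * (c * a) * i = c * (i * a * i) := by simp only [← mul_assoc, hc.eq]
  rw [splitFst_apply, splitFst_apply, h, mul_smul_comm, mul_sub]

lemma splitSnd_mul_left {c : ℍ[ℝ]} (hc : Commute i c) (a : ℍ[ℝ]) :
    splitSnd i j (c * a) = c * splitSnd i j a := by
  have h : i * (c * a) * i = c * (i * a * i) := by simp only [← mul_assoc, hc.eq]
  rw [splitSnd_apply, splitSnd_apply, h, mul_smul_comm, ← mul_add, mul_assoc]

lemma commute_splitFst (hi : i * i = -1) (a : ℍ[ℝ]) : Commute (splitFst i a) i := by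
  rw [splitFst_apply]
  exact ((commute_sub_sandwich hi a).smul_right _).symm

lemma commute_splitSnd (hi : i * i = -1) (hij : i * j = -(j * i)) (a : ℍ[ℝ]) :
    Commute (splitSnd i j a) i := by
  rw [Commute, SemiconjBy, splitSnd_apply, smul_mul_assoc, mul_smul_comm]
  congr 1
  rw [mul_assoc, ← neg_eq_iff_eq_neg.mpr hij, mul_neg, ← mul_assoc, ← neg_mul,
    ← mul_add_sandwich hi, mul_assoc]

lemma splitFst_add_splitSnd_mul (hj : j * j = -1) (a : ℍ[ℝ]) :
    splitFst i a + splitSnd i j a * j = a := by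
  rw [splitFst_apply, splitSnd_apply, smul_mul_assoc, mul_assoc _ j j, hj, mul_neg_one]
  module

end Splitting

section SliceDerivatives

variable {i : ℍ[ℝ]}

variable (i) in
def sliceEmb : ℝ × ℝ →L[ℝ] ℍ[ℝ] :=
  (ContinuousLinearMap.fst ℝ ℝ ℝ).smulRight 1 + (ContinuousLinearMap.snd ℝ ℝ ℝ).smulRight i

@[simp]
lemma sliceEmb_apply (p : ℝ × ℝ) : sliceEmb i p = (p.1 : ℍ[ℝ]) + p.2 • i := by
  simp [sliceEmb, ← Algebra.algebraMap_eq_smul_one, Quaternion.algebraMap_def]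

lemma mem_sliceParam {Ω : Set ℍ[ℝ]} {p : ℝ × ℝ} : p ∈ sliceParam Ω i ↔ sliceEmb i p ∈ Ω := by
  simp [sliceParam]

lemma dbar2_comp_sliceEmb {g : ℍ[ℝ] → ℍ[ℝ]} {p : ℝ × ℝ}
    (hg : DifferentiableAt ℝ g (sliceEmb i p)) :
    dbar2 i (g ∘ sliceEmb i) p = dbar i g (sliceEmb i p) := by
  rw [dbar2, dbar, fderiv_comp p hg (sliceEmb i).differentiableAt, (sliceEmb i).fderiv]
  simp

lemma dbar2_clm_comp (T : ℍ[ℝ] →L[ℝ] ℍ[ℝ]) (hT : ∀ a, T (i * a) = i * T a)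
    {F : ℝ × ℝ → ℍ[ℝ]} {p : ℝ × ℝ} (hF : DifferentiableAt ℝ F p) :
    dbar2 i (T ∘ F) p = T (dbar2 i F p) := by
  rw [dbar2, dbar2, fderiv_comp p T.differentiableAt hF, T.fderiv]
  simp only [ContinuousLinearMap.comp_apply, ← hT, ← map_add, ← map_smul]

lemma dbar2_clm_comp_add_smul_mul_eq_zero (T : ℍ[ℝ] →L[ℝ] ℍ[ℝ]) {w : ℍ[ℝ]}
    (hTi : ∀ a, T (i * a) = i * T a) (hTw : ∀ a, T (w * a) = w * T a)
    {F : ℝ × ℝ → ℍ[ℝ]} {p : ℝ × ℝ} (hF : DifferentiableAt ℝ F p)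
    (h : dbar2 i F p + (1 / 4 : ℝ) • (w * F p) = 0) :
    dbar2 i (T ∘ F) p + (1 / 4 : ℝ) • (w * (T ∘ F) p) = 0 := by
  rw [dbar2_clm_comp T hTi hF, Function.comp_apply, ← hTw, ← map_smul, ← map_add, h, map_zero]

variable {Ω : Set ℍ[ℝ]} {v : ℍ[ℝ]} {f : ℍ[ℝ] → ℍ[ℝ]}

lemma VSliceRegularOn.contDiffOn_comp_sliceEmb (hf : VSliceRegularOn v f Ω) :
    ContDiffOn ℝ 1 (f ∘ sliceEmb i) (sliceParam Ω i) :=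
  hf.1.comp (sliceEmb i).contDiff.contDiffOn fun _ ↦ mem_sliceParam.mp

lemma VSliceRegularOn.differentiableAt (hΩ : IsOpen Ω) (hf : VSliceRegularOn v f Ω) {q : ℍ[ℝ]}
    (hq : q ∈ Ω) : DifferentiableAt ℝ f q :=
  (hf.1.contDiffAt (hΩ.mem_nhds hq)).differentiableAt one_ne_zero

lemma VSliceRegularOn.dbar2_comp_sliceEmb_add_smul_mul_eq_zero (hΩ : IsOpen Ω)
    (hf : VSliceRegularOn v f Ω) (hi : i ∈ Sph2) {p : ℝ × ℝ} (hp : p ∈ sliceParam Ω i) :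
    dbar2 i (f ∘ sliceEmb i) p + (1 / 4 : ℝ) • ((v - i * v * i) * (f ∘ sliceEmb i) p) = 0 := by
  rw [mem_sliceParam] at hp
  rw [dbar2_comp_sliceEmb (hf.differentiableAt hΩ hp), Function.comp_apply]
  exact hf.2 i hi _ ⟨hp, p.1, p.2, sliceEmb_apply p⟩

end SliceDerivatives

/-- Splitting Lemma for `v`-slice regular functions: for orthogonal
`i, j ∈ 𝕊²` there are `ℂ(i)`-valued `C¹` solutions `F, G` of the Vekua equation
`∂/∂z̄ + (1/4)(v - i v i)` on `Ω_i` with `f|_{Ω_i} = F + G j`. -/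
theorem stmt8 (Ω : Set ℍ[ℝ]) (hΩ : AxSymSliceDomain Ω) (v : ℍ[ℝ])
    (f : ℍ[ℝ] → ℍ[ℝ]) (hf : VSliceRegularOn v f Ω)
    (i j : ℍ[ℝ]) (hi : i ∈ Sph2) (hj : j ∈ Sph2) (horth : qinner i j = 0) :
    ∃ F G : ℝ × ℝ → ℍ[ℝ],
      ContDiffOn ℝ 1 F (sliceParam Ω i) ∧ ContDiffOn ℝ 1 G (sliceParam Ω i) ∧
      (∀ p ∈ sliceParam Ω i, F p ∈ slicePlane i ∧ G p ∈ slicePlane i) ∧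
      (∀ p ∈ sliceParam Ω i,
        dbar2 i F p + (1 / 4 : ℝ) • ((v - i * v * i) * F p) = 0) ∧
      (∀ p ∈ sliceParam Ω i,
        dbar2 i G p + (1 / 4 : ℝ) • ((v - i * v * i) * G p) = 0) ∧
      (∀ p ∈ sliceParam Ω i, f ((p.1 : ℍ[ℝ]) + p.2 • i) = F p + G p * j) := by
  have hii := mul_self_eq_neg_one_of_mem_Sph2 hi
  have hjj := mul_self_eq_neg_one_of_mem_Sph2 hj
  have hij := mul_eq_neg_mul_of_qinner_eq_zero hi.1 hj.1 horth
  have hw := commute_sub_sandwich hii v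
  have hg := hf.contDiffOn_comp_sliceEmb (i := i)
  have hgd : ∀ p ∈ sliceParam Ω i, DifferentiableAt ℝ (f ∘ sliceEmb i) p := fun p hp =>
    (hf.differentiableAt hΩ.1 (mem_sliceParam.mp hp)).comp p (sliceEmb i).differentiableAt
  refine ⟨splitFst i ∘ f ∘ sliceEmb i, splitSnd i j ∘ f ∘ sliceEmb i,
    (splitFst i).contDiff.comp_contDiffOn hg, (splitSnd i j).contDiff.comp_contDiffOn hg,
    fun p _ => ⟨mem_slicePlane_of_commute hi (commute_splitFst hii _),
      mem_slicePlane_of_commute hi (commute_splitSnd hii hij _)⟩,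
    fun p hp => ?_, fun p hp => ?_, fun p _ => ?_⟩
  · exact dbar2_clm_comp_add_smul_mul_eq_zero _ (splitFst_mul_left (.refl i))
      (splitFst_mul_left hw) (hgd p hp) (hf.dbar2_comp_sliceEmb_add_smul_mul_eq_zero hΩ.1 hi hp)
  · exact dbar2_clm_comp_add_smul_mul_eq_zero _ (splitSnd_mul_left (.refl i))
      (splitSnd_mul_left hw) (hgd p hp) (hf.dbar2_comp_sliceEmb_add_smul_mul_eq_zero hΩ.1 hi hp)
  · simp only [Function.comp_apply, splitFst_add_splitSnd_mul hjj, sliceEmb_apply]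
end
end

section
/- For the standard structural set, the operator identity G[e^{⟨·,v⟩}f](x) = e^{⟨x,v⟩}·( G[f](x) - (x_vec/2)(x_vec·v + v·x_vec)·f(x) ) holds for all C¹ functions f : Ω → ℍ and all x ∈ Ω, where G[f] = ‖x_vec‖² ∂₀f + x_vec Σ_{k=1}³ x_k ∂_k f and x_vec denotes the vector (imaginary) part of x. -/
open Quaternion

noncomputable section

/-- Vector (imaginary) part of a quaternion. -/
def vecPart (x : ℍ[ℝ]) : ℍ[ℝ] := x - (x.re : ℍ[ℝ])

def qe1 : ℍ[ℝ] := ⟨0, 1, 0, 0⟩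
def qe2 : ℍ[ℝ] := ⟨0, 0, 1, 0⟩
def qe3 : ℍ[ℝ] := ⟨0, 0, 0, 1⟩

/-- The global operator `G[f](x) = ‖x_vec‖² ∂₀ f + x_vec (x₁ ∂₁ f + x₂ ∂₂ f + x₃ ∂₃ f)`. -/
def Gop (f : ℍ[ℝ] → ℍ[ℝ]) (x : ℍ[ℝ]) : ℍ[ℝ] :=
  (‖vecPart x‖ ^ 2) • fderiv ℝ f x 1 +
    vecPart x *
      (x.imI • fderiv ℝ f x qe1 + x.imJ • fderiv ℝ f x qe2 + x.imK • fderiv ℝ f x qe3)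

/-!
By the product rule the derivative of `e^{⟨·,v⟩} f` at `x` is `e^{⟨x,v⟩} (Df(x) + ⟨·,v⟩ f(x))`,
and `G[f](x)` depends linearly on `Df(x)`. On the rank-one part `h ↦ ⟨h,v⟩ f(x)` the operator
gives `(‖x_vec‖² v₀ + ⟨x_vec, v⟩ x_vec) f(x)`, which is `-(x_vec/2)(x_vec v + v x_vec) f(x)`:
for a pure vector `a` one has `a v + v a = 2 v₀ a - 2⟨a, v⟩` and `a² = -‖a‖²`.
-/

theorem qinner_eq_inner (q v : ℍ[ℝ]) : qinner q v = inner ℝ v q := by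
  simp only [qinner, Quaternion.inner_def, Quaternion.re_mul, Quaternion.re_star,
    Quaternion.imI_star, Quaternion.imJ_star, Quaternion.imK_star]
  ring

theorem hasFDerivAt_qinner (v x : ℍ[ℝ]) :
    HasFDerivAt (fun q => qinner q v) (innerSL ℝ v) x := by
  simp_rw [qinner_eq_inner]
  exact (innerSL ℝ v).hasFDerivAt

theorem HasFDerivAt.exp_qinner_smul {E : Type*} [NormedAddCommGroup E] [NormedSpace ℝ E]
    {f : ℍ[ℝ] → E} {f' : ℍ[ℝ] →L[ℝ] E} {x : ℍ[ℝ]} (hf : HasFDerivAt f f' x) (v : ℍ[ℝ]) :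
    HasFDerivAt (fun q => Real.exp (qinner q v) • f q)
      (Real.exp (qinner x v) • (f' + (innerSL ℝ v).smulRight (f x))) x := by
  refine ((hasFDerivAt_qinner v x).exp.smul hf).congr_fderiv ?_
  ext h
  simp [smul_add, mul_smul]

theorem sq_norm_vecPart (x : ℍ[ℝ]) : ‖vecPart x‖ ^ 2 = x.imI ^ 2 + x.imJ ^ 2 + x.imK ^ 2 := by
  rw [sq, ← Quaternion.normSq_eq_norm_mul_self, Quaternion.normSq_def']
  simp [vecPart]

theorem half_vecPart_mul_anticomm (x v : ℍ[ℝ]) :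
    (1 / 2 : ℝ) • (vecPart x * (vecPart x * v + v * vecPart x)) =
      -(((‖vecPart x‖ ^ 2 * v.re : ℝ) : ℍ[ℝ]) + qinner (vecPart x) v • vecPart x) := by
  rw [sq_norm_vecPart]
  ext <;> simp [vecPart, qinner, -Quaternion.coe_pow] <;> ring

def GopLinear (x : ℍ[ℝ]) : (ℍ[ℝ] →L[ℝ] ℍ[ℝ]) →ₗ[ℝ] ℍ[ℝ] where
  toFun D := ‖vecPart x‖ ^ 2 • D 1 + vecPart x * (x.imI • D qe1 + x.imJ • D qe2 + x.imK • D qe3)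
  map_add' D D' := by
    simp only [add_apply, smul_add]
    noncomm_ring
  map_smul' c D := by
    simp only [smul_apply, RingHom.id_apply, smul_add, mul_add,
      mul_smul_comm, smul_comm c]

theorem Gop_eq_GopLinear_fderiv (f : ℍ[ℝ] → ℍ[ℝ]) (x : ℍ[ℝ]) :
    Gop f x = GopLinear x (fderiv ℝ f x) :=
  rfl

theorem GopLinear_smulRight_innerSL (x v c : ℍ[ℝ]) :
    GopLinear x ((innerSL ℝ v).smulRight c) =
      (((‖vecPart x‖ ^ 2 * v.re : ℝ) : ℍ[ℝ]) + qinner (vecPart x) v • vecPart x) * c := by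
  simp only [GopLinear, LinearMap.coe_mk, AddHom.coe_mk, ContinuousLinearMap.smulRight_apply,
    innerSL_apply_apply, ← qinner_eq_inner]
  have h1 : qinner 1 v = v.re := by simp [qinner]
  have he1 : qinner qe1 v = v.imI := by simp [qinner, qe1]
  have he2 : qinner qe2 v = v.imJ := by simp [qinner, qe2]
  have he3 : qinner qe3 v = v.imK := by simp [qinner, qe3]
  have hvec : qinner (vecPart x) v = x.imI * v.imI + x.imJ * v.imJ + x.imK * v.imK := by
    simp [qinner, vecPart]
  rw [h1, he1, he2, he3, hvec, add_mul, Quaternion.coe_mul_eq_smul, smul_mul_assoc]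
  simp only [mul_add, mul_smul_comm]
  module

/-- `G[e^{⟨·,v⟩} f](x) = e^{⟨x,v⟩} (G[f](x) - (x_vec/2)(x_vec v + v x_vec) f(x))`. -/
theorem stmt10 (Ω : Set ℍ[ℝ]) (hΩ : IsOpen Ω) (v : ℍ[ℝ])
    (f : ℍ[ℝ] → ℍ[ℝ]) (hf : ContDiffOn ℝ 1 f Ω) (x : ℍ[ℝ]) (hx : x ∈ Ω) :
    Gop (fun q => Real.exp (qinner q v) • f q) x =
      Real.exp (qinner x v) •
        (Gop f x - (1 / 2 : ℝ) • (vecPart x * ((vecPart x * v + v * vecPart x) * f x))) := by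
  have hfx : HasFDerivAt f (fderiv ℝ f x) x :=
    ((hf.contDiffAt (hΩ.mem_nhds hx)).differentiableAt one_ne_zero).hasFDerivAt
  rw [Gop_eq_GopLinear_fderiv, (hfx.exp_qinner_smul v).fderiv, map_smul, map_add,
    GopLinear_smulRight_innerSL, ← Gop_eq_GopLinear_fderiv, ← mul_assoc, ← smul_mul_assoc,
    half_vecPart_mul_anticomm, neg_mul, sub_neg_eq_add]
end
end
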